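/- Let d > 0, let V_int : ℝ → ℝ, and let u₁, u₂ : ℝ² × ℝ → ℂ be 𝕃-periodic in their first variable satisfying u_j(R_{2π/3}⁻¹ x, z) = ω^j e^{i(K − R_{2π/3}K)·x} u_j(x, z) for j = 1, 2 and all (x,z) (ω := e^{2πi/3}), and u₂(x, z) = conj(u₁(−x, z)) for all (x,z), with enough integrability for the integrals below to converge absolutely. Define the 2×2 matrix W with entries W_{jj'} := ∫_{Ω×ℝ} conj(u_j(x, z − d/2)) u_{j'}(x, z − d/2) V_int(z) dx dz. Then W is proportional to the identity: W_{12} = W_{21} = 0 and W_{11} = W_{22} ∈ ℝ. -/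

import Mathlib

noncomputable section

open MeasureTheory Real Complex

abbrev Pt : Type := ℝ × ℝ

/-- Euclidean dot product on ℝ². -/
def dot (v w : Pt) : ℝ := v.1 * w.1 + v.2 * w.2

/-- The matrix J acting by J(x₁,x₂) = (x₂, −x₁). -/
def Jmat (v : Pt) : Pt := (v.2, -v.1)

/-- Rotation of ℝ² by angle θ. -/
def rotA (θ : ℝ) (v : Pt) : Pt :=
  (Real.cos θ * v.1 - Real.sin θ * v.2, Real.sin θ * v.1 + Real.cos θ * v.2)

/-- Lattice vector a₁ = a₀(1/2, −√3/2). -/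
def av1 (a0 : ℝ) : Pt := (a0 / 2, -(Real.sqrt 3 * a0 / 2))

/-- Lattice vector a₂ = a₀(1/2, √3/2). -/
def av2 (a0 : ℝ) : Pt := (a0 / 2, Real.sqrt 3 * a0 / 2)

/-- The graphene lattice 𝕃 = ℤa₁ + ℤa₂. -/
def lat (a0 : ℝ) : AddSubgroup Pt := AddSubgroup.closure {av1 a0, av2 a0}

/-- The moiré lattice 𝕃_M = J𝕃. -/
def latM (a0 : ℝ) : AddSubgroup Pt := AddSubgroup.closure {Jmat (av1 a0), Jmat (av2 a0)}

/-- Dual basis vector a₁*. -/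
def as1 (a0 : ℝ) : Pt := (2 * π / a0, -(2 * π / (Real.sqrt 3 * a0)))

/-- Dual basis vector a₂*. -/
def as2 (a0 : ℝ) : Pt := (2 * π / a0, 2 * π / (Real.sqrt 3 * a0))

/-- The Dirac point K = (a₁* + a₂*)/3. -/
def Kpt (a0 : ℝ) : Pt := (3 : ℝ)⁻¹ • (as1 a0 + as2 a0)

/-- A dual lattice vector G = m₁a₁* + m₂a₂*. -/
def dualVec (a0 : ℝ) (m : ℤ × ℤ) : Pt := (m.1 : ℝ) • as1 a0 + (m.2 : ℝ) • as2 a0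

/-- 𝕃-periodicity in the first variable. -/
def LPeriodic (a0 : ℝ) (f : Pt → ℝ → ℂ) : Prop :=
  ∀ R ∈ lat a0, ∀ (x : Pt) (z : ℝ), f (x + R) z = f x z

/-- K-quasiperiodicity in the first variable. -/
def KQuasiperiodic (a0 : ℝ) (Φ : Pt → ℝ → ℂ) : Prop :=
  ∀ R ∈ lat a0, ∀ (x : Pt) (z : ℝ),
    Φ (x + R) z = Complex.exp (Complex.I * (dot (Kpt a0) R : ℂ)) * Φ x z

/-- ω = e^{2πi/3}. -/
def ωc : ℂ := Complex.exp (2 * Real.pi * Complex.I / 3)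

/-- The integrand of ((f,g))_d^{ηη'}(X). -/
def braFn (d η η' : ℝ) (f g : Pt → ℝ → ℂ) (X : Pt) (p : Pt × ℝ) : ℂ :=
  (starRingEnd ℂ) (f (p.1 - (η / 2) • Jmat X) (p.2 - η * d / 2)) *
    g (p.1 - (η' / 2) • Jmat X) (p.2 - η' * d / 2)

/-- ((f,g))_d^{ηη'}(X), the interlayer pairing. -/
def bra (d : ℝ) (Ω : Set Pt) (η η' : ℝ) (f g : Pt → ℝ → ℂ) (X : Pt) : ℂ :=
  ∫ p in Ω ×ˢ (Set.univ : Set ℝ), braFn d η η' f g X p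

/-! The integrand of `W_{jj'}` is `𝕃`-periodic in `x`, so its integral over `Ω × ℝ` is unchanged
when `x` is replaced by `e x` for a measure-preserving additive automorphism `e` of `ℝ²` mapping
`𝕃` onto itself, since `e Ω` is another fundamental domain. For `e = R_{2π/3}⁻¹` the common phase
`e^{i(K − R_{2π/3}K)·x}` cancels in `conj(u₁) u₂`, which therefore only picks up the factor
`conj(ω) ω² = ω ≠ 1`; hence `W₁₂ = 0`, and `W₂₁ = conj W₁₂`. For `e = −id`, the relation
`u₂(x) = conj(u₁(−x))` turns the integrand of `W₂₂` into that of `W₁₁`. The diagonal entries are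
real because their integrands are. -/

namespace MeasureTheory.IsAddFundamentalDomain

variable {E Y F : Type*} [AddCommGroup E] [MeasurableSpace E] [MeasurableAdd E]
  {μ : Measure E} [μ.IsAddLeftInvariant] {L : AddSubgroup E} [Countable L] {Ω : Set E}
  [NormedAddCommGroup F] [NormedSpace ℝ F]

theorem setIntegral_comp_eq_of_periodic (hΩ : IsAddFundamentalDomain L Ω μ) (e : E ≃ᵐ E)
    (he : MeasurePreserving e μ μ) (he_add : ∀ x y, e (x + y) = e x + e y)
    (heL : ∀ x, e x ∈ L ↔ x ∈ L) {g : E → F} (hg : ∀ γ ∈ L, ∀ x, g (γ + x) = g x) :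
    ∫ x in Ω, g (e x) ∂μ = ∫ x in Ω, g x ∂μ := by
  have hsymm : ∀ γ x, e.symm (e γ + x) = γ + e.symm x := fun γ x =>
    e.injective (by rw [he_add, e.apply_symm_apply, e.apply_symm_apply])
  have hΩ' : IsAddFundamentalDomain L (e.symm ⁻¹' Ω) μ := by
    refine hΩ.preimage_of_equiv (he.symm e).quasiMeasurePreserving
      (e := fun γ => ⟨e γ, (heL γ).2 γ.2⟩) ⟨fun γ γ' h => ?_, fun γ => ?_⟩ fun γ x => hsymm γ x
    · exact Subtype.ext (e.injective (congrArg Subtype.val h))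
    · exact ⟨⟨e.symm γ, (heL _).1 (by simp)⟩, Subtype.ext (e.apply_symm_apply γ)⟩
  calc ∫ x in Ω, g (e x) ∂μ = ∫ x in e ⁻¹' (e.symm ⁻¹' Ω), g (e x) ∂μ := by
        rw [← Set.preimage_comp, e.symm_comp_self, Set.preimage_id]
    _ = ∫ x in e.symm ⁻¹' Ω, g x ∂μ := he.setIntegral_preimage_emb e.measurableEmbedding g _
    _ = ∫ x in Ω, g x ∂μ := hΩ'.setIntegral_eq hΩ fun γ x => hg γ γ.2 x

variable [MeasurableSpace Y] {ν : Measure Y} [SFinite μ] [SFinite ν]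

theorem setIntegral_prod_univ_comp_eq_of_periodic (hΩ : IsAddFundamentalDomain L Ω μ)
    (e : E ≃ᵐ E) (he : MeasurePreserving e μ μ) (he_add : ∀ x y, e (x + y) = e x + e y)
    (heL : ∀ x, e x ∈ L ↔ x ∈ L) {G : E × Y → F} (hG : ∀ γ ∈ L, ∀ x y, G (γ + x, y) = G (x, y))
    (hint : IntegrableOn G (Ω ×ˢ Set.univ) (μ.prod ν))
    (hint_comp : IntegrableOn (fun p => G (e p.1, p.2)) (Ω ×ˢ Set.univ) (μ.prod ν)) :
    ∫ p in Ω ×ˢ Set.univ, G (e p.1, p.2) ∂μ.prod ν = ∫ p in Ω ×ˢ Set.univ, G p ∂μ.prod ν := by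
  rw [setIntegral_prod _ hint_comp, setIntegral_prod _ hint]
  exact hΩ.setIntegral_comp_eq_of_periodic e he he_add heL
    (g := fun x => ∫ y in Set.univ, G (x, y) ∂ν) fun γ hγ x => by simp only [hG γ hγ]

theorem setIntegral_prod_univ_eq_zero_of_comp_eq_mul (hΩ : IsAddFundamentalDomain L Ω μ)
    (e : E ≃ᵐ E) (he : MeasurePreserving e μ μ) (he_add : ∀ x y, e (x + y) = e x + e y)
    (heL : ∀ x, e x ∈ L ↔ x ∈ L) {G : E × Y → ℂ} (hG : ∀ γ ∈ L, ∀ x y, G (γ + x, y) = G (x, y))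
    (hint : IntegrableOn G (Ω ×ˢ Set.univ) (μ.prod ν)) {c : ℂ} (hc : c ≠ 1)
    (hGe : ∀ x y, G (e x, y) = c * G (x, y)) :
    ∫ p in Ω ×ˢ Set.univ, G p ∂μ.prod ν = 0 := by
  have h := hΩ.setIntegral_prod_univ_comp_eq_of_periodic e he he_add heL hG hint
    (by simp only [hGe, Prod.mk.eta]; exact hint.const_mul c)
  simp only [hGe, integral_const_mul] at h
  have : (c - 1) * ∫ p in Ω ×ˢ Set.univ, G p ∂μ.prod ν = 0 := by rw [sub_mul, h, one_mul, sub_self]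
  exact (mul_eq_zero.1 this).resolve_left (sub_ne_zero.2 hc)

end MeasureTheory.IsAddFundamentalDomain

theorem AddSubgroup.countable_closure_pair {A : Type*} [AddCommGroup A] (a b : A) :
    Countable (AddSubgroup.closure {a, b}) := by
  have h : (AddSubgroup.closure {a, b} : Set A) ⊆
      Set.range fun mn : ℤ × ℤ => mn.1 • a + mn.2 • b := fun z hz => by
    obtain ⟨m, n, rfl⟩ := AddSubgroup.mem_closure_pair.1 hz
    exact ⟨(m, n), rfl⟩
  exact ((Set.countable_range _).mono h).to_subtype

theorem lat_le_comap {a0 : ℝ} (f : Pt →+ Pt) (h₁ : f (av1 a0) ∈ lat a0)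
    (h₂ : f (av2 a0) ∈ lat a0) : lat a0 ≤ (lat a0).comap f :=
  (AddSubgroup.closure_le _).2 <| Set.insert_subset_iff.2 ⟨h₁, Set.singleton_subset_iff.2 h₂⟩

theorem rotA_rotA (θ₁ θ₂ : ℝ) (v : Pt) : rotA θ₁ (rotA θ₂ v) = rotA (θ₁ + θ₂) v := by
  simp only [rotA, Real.cos_add, Real.sin_add, Prod.mk.injEq]
  constructor <;> ring

theorem rotA_zero (v : Pt) : rotA 0 v = v := by simp [rotA]

def rotL (θ : ℝ) : Pt ≃ₗ[ℝ] Pt where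
  toFun := rotA θ
  invFun := rotA (-θ)
  map_add' a b := by
    simp only [rotA, Prod.fst_add, Prod.snd_add, Prod.mk_add_mk]
    congr 1 <;> ring
  map_smul' c a := by
    simp only [rotA, Prod.smul_fst, Prod.smul_snd, smul_eq_mul, RingHom.id_apply, Prod.smul_mk]
    congr 1 <;> ring
  left_inv v := by rw [rotA_rotA, neg_add_cancel, rotA_zero]
  right_inv v := by rw [rotA_rotA, add_neg_cancel, rotA_zero]

@[simp] theorem coe_rotL (θ : ℝ) : ⇑(rotL θ) = rotA θ := rfl

theorem det_rotL (θ : ℝ) : LinearMap.det (rotL θ : Pt →ₗ[ℝ] Pt) = 1 := by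
  rw [← LinearMap.det_toMatrix (Module.Basis.finTwoProd ℝ), Matrix.det_fin_two]
  simp [LinearMap.toMatrix_apply, rotA, ← sq]

theorem measurePreserving_rotA (θ : ℝ) : MeasurePreserving (rotA θ) volume volume := by
  refine ⟨(rotL θ).toContinuousLinearEquiv.continuous.measurable, ?_⟩
  rw [← coe_rotL, ← LinearEquiv.coe_coe,
    Measure.map_linearMap_addHaar_eq_smul_addHaar _ (by simp [det_rotL]), det_rotL]
  simp

theorem cos_two_pi_div_three : Real.cos (2 * π / 3) = -(1 / 2) := by
  rw [show 2 * π / 3 = π - π / 3 by ring, Real.cos_pi_sub, Real.cos_pi_div_three]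

theorem sin_two_pi_div_three : Real.sin (2 * π / 3) = √3 / 2 := by
  rw [show 2 * π / 3 = π - π / 3 by ring, Real.sin_pi_sub, Real.sin_pi_div_three]

theorem rotA_two_pi_div_three_av1 (a0 : ℝ) : rotA (2 * π / 3) (av1 a0) = av2 a0 := by
  simp only [rotA, av1, av2, cos_two_pi_div_three, sin_two_pi_div_three, Prod.mk.injEq]
  constructor
  · linear_combination (a0 / 4) * Real.mul_self_sqrt (show (0 : ℝ) ≤ 3 by norm_num)
  · ring

theorem rotA_two_pi_div_three_av2 (a0 : ℝ) :
    rotA (2 * π / 3) (av2 a0) = -(av1 a0 + av2 a0) := by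
  simp only [rotA, av1, av2, cos_two_pi_div_three, sin_two_pi_div_three, Prod.mk_add_mk,
    Prod.neg_mk, Prod.mk.injEq]
  constructor
  · linear_combination (-(a0 / 4)) * Real.mul_self_sqrt (show (0 : ℝ) ≤ 3 by norm_num)
  · ring

theorem rotA_two_pi_div_three_mem_lat {a0 : ℝ} {v : Pt} (hv : v ∈ lat a0) :
    rotA (2 * π / 3) v ∈ lat a0 := by
  have hav1 : av1 a0 ∈ lat a0 := AddSubgroup.subset_closure (by simp)
  have hav2 : av2 a0 ∈ lat a0 := AddSubgroup.subset_closure (by simp)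
  refine lat_le_comap (rotL (2 * π / 3)).toLinearMap.toAddMonoidHom ?_ ?_ hv
  · simpa [rotA_two_pi_div_three_av1] using hav2
  · simpa [rotA_two_pi_div_three_av2] using neg_mem (add_mem hav1 hav2)

theorem rotA_neg_two_pi_div_three (v : Pt) :
    rotA (-(2 * π / 3)) v = rotA (2 * π / 3) (rotA (2 * π / 3) v) := by
  rw [rotA_rotA, show 2 * π / 3 + 2 * π / 3 = -(2 * π / 3) + 2 * π by ring]
  simp only [rotA, Real.cos_add_two_pi, Real.sin_add_two_pi]

theorem rotA_neg_two_pi_div_three_mem_lat_iff {a0 : ℝ} {v : Pt} :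
    rotA (-(2 * π / 3)) v ∈ lat a0 ↔ v ∈ lat a0 := by
  refine ⟨fun h => ?_, fun h => ?_⟩
  · simpa only [rotA_rotA, add_neg_cancel, rotA_zero] using rotA_two_pi_div_three_mem_lat h
  · rw [rotA_neg_two_pi_div_three]
    exact rotA_two_pi_div_three_mem_lat (rotA_two_pi_div_three_mem_lat h)

theorem isPrimitiveRoot_ωc : IsPrimitiveRoot ωc 3 := by
  simpa [ωc] using Complex.isPrimitiveRoot_exp 3 (by norm_num)

theorem conj_mul_self_of_norm_eq_one {c : ℂ} (hc : ‖c‖ = 1) : (starRingEnd ℂ) c * c = 1 := by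
  rw [Complex.conj_mul', hc]; norm_num

theorem conj_ωc_mul_ωc_sq : (starRingEnd ℂ) (ωc ^ (1 : ℤ)) * ωc ^ (2 : ℤ) = ωc := by
  rw [zpow_one, zpow_two, ← mul_assoc,
    conj_mul_self_of_norm_eq_one (isPrimitiveRoot_ωc.norm'_eq_one (by norm_num)), one_mul]

def interlayerIntegrand (d : ℝ) (V : ℝ → ℝ) (f g : Pt → ℝ → ℂ) (p : Pt × ℝ) : ℂ :=
  (starRingEnd ℂ) (f p.1 (p.2 - d / 2)) * g p.1 (p.2 - d / 2) * (V p.2 : ℂ)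

section interlayerIntegrand

variable {d : ℝ} {V : ℝ → ℝ} {f g : Pt → ℝ → ℂ}

theorem conj_interlayerIntegrand (p : Pt × ℝ) :
    (starRingEnd ℂ) (interlayerIntegrand d V f g p) = interlayerIntegrand d V g f p := by
  simp only [interlayerIntegrand, map_mul, Complex.conj_conj, Complex.conj_ofReal]
  ring

theorem interlayerIntegrand_add_left {a0 : ℝ} (hf : LPeriodic a0 f) (hg : LPeriodic a0 g)
    {R : Pt} (hR : R ∈ lat a0) (x : Pt) (z : ℝ) :
    interlayerIntegrand d V f g (R + x, z) = interlayerIntegrand d V f g (x, z) := by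
  simp only [interlayerIntegrand, add_comm R x, hf R hR, hg R hR]

theorem interlayerIntegrand_comp_of_eq_mul {e : Pt → Pt} {c : Pt → ℂ} {α β : ℂ}
    (hc : ∀ x, ‖c x‖ = 1) (hf : ∀ x z, f (e x) z = α * c x * f x z)
    (hg : ∀ x z, g (e x) z = β * c x * g x z) (x : Pt) (z : ℝ) :
    interlayerIntegrand d V f g (e x, z) =
      (starRingEnd ℂ) α * β * interlayerIntegrand d V f g (x, z) := by
  simp only [interlayerIntegrand, hf, hg, map_mul]
  linear_combination (starRingEnd ℂ) α * β * (starRingEnd ℂ) (f x (z - d / 2)) *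
    g x (z - d / 2) * (V z : ℂ) * conj_mul_self_of_norm_eq_one (hc x)

theorem interlayerIntegrand_of_eq_conj_comp_neg (hg : ∀ x z, g x z = (starRingEnd ℂ) (f (-x) z)) :
    interlayerIntegrand d V g g = fun p => interlayerIntegrand d V f f (-p.1, p.2) := by
  ext p
  simp only [interlayerIntegrand, hg, Complex.conj_conj]
  ring

end interlayerIntegrand

theorem stmt18_general (a0 d : ℝ) (Ω : Set Pt)
    (hΩ : IsAddFundamentalDomain (lat a0) Ω volume)
    (Vint : ℝ → ℝ) (u : ℤ → Pt → ℝ → ℂ)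
    (huper : ∀ j ∈ ({1, 2} : Set ℤ), LPeriodic a0 (u j))
    (hurot : ∀ j ∈ ({1, 2} : Set ℤ), ∀ (x : Pt) (z : ℝ),
      u j (rotA (-(2 * π / 3)) x) z =
        ωc ^ j * Complex.exp (Complex.I *
          (dot (Kpt a0 - rotA (2 * π / 3) (Kpt a0)) x : ℂ)) * u j x z)
    (hu21 : ∀ (x : Pt) (z : ℝ), u 2 x z = (starRingEnd ℂ) (u 1 (-x) z))
    (hint : ∀ j ∈ ({1, 2} : Set ℤ), ∀ j' ∈ ({1, 2} : Set ℤ),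
      IntegrableOn
        (fun p : Pt × ℝ =>
          (starRingEnd ℂ) (u j p.1 (p.2 - d / 2)) * u j' p.1 (p.2 - d / 2) *
            ((Vint p.2 : ℝ) : ℂ))
        (Ω ×ˢ (Set.univ : Set ℝ)) volume)
    (Wm : ℤ → ℤ → ℂ)
    (hWm : ∀ j j' : ℤ, Wm j j' =
      ∫ p in Ω ×ˢ (Set.univ : Set ℝ),
        (starRingEnd ℂ) (u j p.1 (p.2 - d / 2)) * u j' p.1 (p.2 - d / 2) *
          ((Vint p.2 : ℝ) : ℂ)) :
    Wm 1 2 = 0 ∧ Wm 2 1 = 0 ∧ Wm 1 1 = Wm 2 2 ∧ (starRingEnd ℂ) (Wm 1 1) = Wm 1 1 := by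
  have h₁ : (1 : ℤ) ∈ ({1, 2} : Set ℤ) := by simp
  have h₂ : (2 : ℤ) ∈ ({1, 2} : Set ℤ) := by simp
  have : Countable (lat a0) := AddSubgroup.countable_closure_pair _ _
  change ∀ j j', Wm j j' = ∫ p in Ω ×ˢ Set.univ, interlayerIntegrand d Vint (u j) (u j') p
    ∂(volume.prod volume) at hWm
  change ∀ j ∈ _, ∀ j' ∈ _, IntegrableOn (interlayerIntegrand d Vint (u j) (u j'))
    (Ω ×ˢ Set.univ) (volume.prod volume) at hint
  have hper {j j' : ℤ} (hj : j ∈ ({1, 2} : Set ℤ)) (hj' : j' ∈ ({1, 2} : Set ℤ)) (R : Pt)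
      (hR : R ∈ lat a0) := interlayerIntegrand_add_left (d := d) (V := Vint)
    (huper j hj) (huper j' hj') hR
  have h12 : Wm 1 2 = 0 := by
    rw [hWm]
    refine hΩ.setIntegral_prod_univ_eq_zero_of_comp_eq_mul
      (rotL (-(2 * π / 3))).toContinuousLinearEquiv.toHomeomorph.toMeasurableEquiv
      (measurePreserving_rotA _) (rotL _).map_add (fun _ => rotA_neg_two_pi_div_three_mem_lat_iff)
      (hper h₁ h₂) (hint 1 h₁ 2 h₂) (isPrimitiveRoot_ωc.ne_one (by norm_num)) fun x z => ?_
    rw [← conj_ωc_mul_ωc_sq]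
    exact interlayerIntegrand_comp_of_eq_mul (fun x => Complex.norm_exp_I_mul_ofReal _)
      (hurot 1 h₁) (hurot 2 h₂) x z
  refine ⟨h12, ?_, ?_, ?_⟩
  · have h21 : Wm 2 1 = (starRingEnd ℂ) (Wm 1 2) := by
      simp_rw [hWm, ← integral_conj, conj_interlayerIntegrand]
    rw [h21, h12, map_zero]
  · have hneg := interlayerIntegrand_of_eq_conj_comp_neg (d := d) (V := Vint) hu21
    rw [hWm, hWm, hneg, ← hΩ.setIntegral_prod_univ_comp_eq_of_periodic (MeasurableEquiv.neg Pt)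
      (Measure.measurePreserving_neg _) neg_add (fun _ => neg_mem_iff) (hper h₁ h₁)
      (hint 1 h₁ 1 h₁) (hneg ▸ hint 2 h₂ 2 h₂)]
    rfl
  · simp_rw [hWm, ← integral_conj, conj_interlayerIntegrand]

/-- the interlayer correction matrix
W_{jj'} := ∫_{Ω×ℝ} conj(u_j(x,z−d/2)) u_{j'}(x,z−d/2) V_int(z) dx dz
is a real multiple of the identity. -/
theorem stmt18 (a0 d : ℝ) (ha0 : 0 < a0) (hd : 0 < d) (Ω : Set Pt)
    (hΩ : IsAddFundamentalDomain (lat a0) Ω volume)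
    (Vint : ℝ → ℝ) (u : ℤ → Pt → ℝ → ℂ)
    (huper : ∀ j ∈ ({1, 2} : Set ℤ), LPeriodic a0 (u j))
    (hurot : ∀ j ∈ ({1, 2} : Set ℤ), ∀ (x : Pt) (z : ℝ),
      u j (rotA (-(2 * π / 3)) x) z =
        ωc ^ j * Complex.exp (Complex.I *
          (dot (Kpt a0 - rotA (2 * π / 3) (Kpt a0)) x : ℂ)) * u j x z)
    (hu21 : ∀ (x : Pt) (z : ℝ), u 2 x z = (starRingEnd ℂ) (u 1 (-x) z))
    (hint : ∀ j ∈ ({1, 2} : Set ℤ), ∀ j' ∈ ({1, 2} : Set ℤ),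
      IntegrableOn
        (fun p : Pt × ℝ =>
          (starRingEnd ℂ) (u j p.1 (p.2 - d / 2)) * u j' p.1 (p.2 - d / 2) *
            ((Vint p.2 : ℝ) : ℂ))
        (Ω ×ˢ (Set.univ : Set ℝ)) volume)
    (Wm : ℤ → ℤ → ℂ)
    (hWm : ∀ j j' : ℤ, Wm j j' =
      ∫ p in Ω ×ˢ (Set.univ : Set ℝ),
        (starRingEnd ℂ) (u j p.1 (p.2 - d / 2)) * u j' p.1 (p.2 - d / 2) *
          ((Vint p.2 : ℝ) : ℂ)) :
    Wm 1 2 = 0 ∧ Wm 2 1 = 0 ∧ Wm 1 1 = Wm 2 2 ∧ (starRingEnd ℂ) (Wm 1 1) = Wm 1 1 :=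
  stmt18_general a0 d Ω hΩ Vint u huper hurot hu21 hint Wm hWm
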